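/- Let ζ ∈ ℂ with Im ζ > 0 and Z ∈ ℂ. Define F : T → ℂ by F(z) := (2π)⁻³ ∫_{ℝ³} [ Z · (2 E_ζ(k))⁻¹ · exp(−i E_ζ(k) z₀ + i(k₁z₁ + k₂z₂ + k₃z₃)) + conj(Z) · (2 · conj(E_ζ(k)))⁻¹ · exp(−i · conj(E_ζ(k)) · z₀ + i(k₁z₁ + k₂z₂ + k₃z₃)) ] dk. Then for every z ∈ T the integrand is integrable over k ∈ ℝ³, and F is holomorphic on T (ℂ-differentiable as a function of the four complex variables at every point of the open set T). -/

import Mathlib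

open MeasureTheory Complex

/-- Principal branch of `√(‖k‖² + ζ)` for `k ∈ ℝ³`. -/
noncomputable def Esqrt (ζ : ℂ) (k : EuclideanSpace ℝ (Fin 3)) : ℂ :=
  ((‖k‖ ^ 2 : ℝ) + ζ) ^ ((1 : ℂ) / 2)

/-- The forward tube `T = {z ∈ ℂ⁴ : −Im z₀ > √((Im z₁)² + (Im z₂)² + (Im z₃)²)}`. -/
def ForwardTube : Set (Fin 4 → ℂ) :=
  {z | Real.sqrt ((z 1).im ^ 2 + (z 2).im ^ 2 + (z 3).im ^ 2) < -(z 0).im}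

/-- The integrand of the holomorphic Wightman function of one pair of
complex-conjugate simple poles. -/
noncomputable def cpIntegrand (ζ Z : ℂ) (z : Fin 4 → ℂ) (k : EuclideanSpace ℝ (Fin 3)) : ℂ :=
  Z * (2 * Esqrt ζ k)⁻¹ *
      Complex.exp (-Complex.I * Esqrt ζ k * z 0 +
        Complex.I * ((k 0 : ℂ) * z 1 + (k 1 : ℂ) * z 2 + (k 2 : ℂ) * z 3)) +
    (starRingEnd ℂ Z) * (2 * starRingEnd ℂ (Esqrt ζ k))⁻¹ *
      Complex.exp (-Complex.I * starRingEnd ℂ (Esqrt ζ k) * z 0 +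
        Complex.I * ((k 0 : ℂ) * z 1 + (k 1 : ℂ) * z 2 + (k 2 : ℂ) * z 3))

/-- The holomorphic Wightman function of one pair of complex-conjugate simple poles. -/
noncomputable def cpWightman (ζ Z : ℂ) (z : Fin 4 → ℂ) : ℂ :=
  ((2 * Real.pi : ℝ) : ℂ)⁻¹ ^ 3 * ∫ k : EuclideanSpace ℝ (Fin 3), cpIntegrand ζ Z z k

/-!
Write `E(k) = √(‖k‖² + ζ)`. As `Re E ≥ 0` and `(E - ‖k‖)(E + ‖k‖) = ζ`, both `E` and `conj E` stay
within `‖ζ‖ / √(Im ζ)` of `‖k‖` and have modulus at least `√(Im ζ)`. For `z = ξ - iη` the modulus of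
each exponential is then at most `exp (‖ζ‖ / √(Im ζ) · ‖z₀‖ - (η⁰ - ‖η⃗‖) ‖k‖)`, which decays
exponentially in `k`, locally uniformly on the tube, while the `z`-derivative of the exponent grows
only linearly in `k`. Integrability follows, and holomorphy by differentiating under the integral
sign.
-/

open Filter Topology Set ContinuousLinearMap
open scoped ComplexConjugate

theorem integrable_norm_pow_mul_exp_neg_mul_norm {E : Type*} [NormedAddCommGroup E]
    [NormedSpace ℝ E] [FiniteDimensional ℝ E] [Nontrivial E] [MeasurableSpace E] [BorelSpace E]
    (μ : Measure E) [μ.IsAddHaarMeasure] (n : ℕ) {ε : ℝ} (hε : 0 < ε) :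
    Integrable (fun x : E => ‖x‖ ^ n * Real.exp (-ε * ‖x‖)) μ := by
  rw [integrable_fun_norm_addHaar μ (f := fun y => y ^ n * Real.exp (-ε * y))]
  refine (integrableOn_rpow_mul_exp_neg_mul_rpow (s := (Module.finrank ℝ E - 1 + n : ℕ)) (p := 1)
    (neg_one_lt_zero.trans_le (Nat.cast_nonneg _)) one_pos hε).congr_fun (fun y _ => ?_)
    measurableSet_Ioi
  simp only [Real.rpow_natCast, Real.rpow_one, smul_eq_mul, pow_add]
  ring

theorem hasFDerivAt_integral_mul_cexp {α E : Type*} [MeasurableSpace α] {μ : Measure α}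
    [NormedAddCommGroup E] [NormedSpace ℂ E] {a : α → ℂ} {L : α → E →L[ℂ] ℂ} {z₀ : E}
    {s : Set E} {bound : α → ℝ} (ha : AEStronglyMeasurable a μ) (hL : AEStronglyMeasurable L μ)
    (hs : s ∈ 𝓝 z₀) (hint : Integrable (fun k => a k * cexp (L k z₀)) μ)
    (hbound : ∀ᵐ k ∂μ, ∀ z ∈ s, ‖a k * cexp (L k z)‖ * ‖L k‖ ≤ bound k)
    (hbound_int : Integrable bound μ) :
    HasFDerivAt (fun z => ∫ k, a k * cexp (L k z) ∂μ)
      (∫ k, (a k * cexp (L k z₀)) • L k ∂μ) z₀ := by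
  have hmeas (z : E) : AEStronglyMeasurable (fun k => a k * cexp (L k z)) μ :=
    ha.mul (continuous_exp.comp_aestronglyMeasurable (hL.apply_continuousLinearMap z))
  refine hasFDerivAt_integral_of_dominated_of_fderiv_le
    (F' := fun z k => (a k * cexp (L k z)) • L k) hs (.of_forall hmeas) hint
    ((hmeas z₀).smul hL) ?_ hbound_int (.of_forall fun k z _ => ?_)
  · filter_upwards [hbound] with k hk z hz
    rw [norm_smul]
    exact hk z hz
  · have h := ((L k).hasFDerivAt (x := z)).cexp.const_mul (a k)
    rwa [smul_smul] at h

def spatialIm (z : Fin 4 → ℂ) : EuclideanSpace ℝ (Fin 3) := !₂[(z 1).im, (z 2).im, (z 3).im]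

noncomputable def tubeMargin (z : Fin 4 → ℂ) : ℝ := -(z 0).im - ‖spatialIm z‖

theorem norm_spatialIm (z : Fin 4 → ℂ) :
    ‖spatialIm z‖ = Real.sqrt ((z 1).im ^ 2 + (z 2).im ^ 2 + (z 3).im ^ 2) := by
  simp [spatialIm, EuclideanSpace.norm_eq, Fin.sum_univ_three]

theorem mem_forwardTube_iff {z : Fin 4 → ℂ} : z ∈ ForwardTube ↔ 0 < tubeMargin z := by
  rw [ForwardTube, mem_ofPred_eq, tubeMargin, norm_spatialIm, sub_pos]

theorem continuous_tubeMargin : Continuous tubeMargin := by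
  unfold tubeMargin spatialIm
  fun_prop

theorem isOpen_forwardTube : IsOpen ForwardTube := by
  have h : ForwardTube = {z | 0 < tubeMargin z} := by ext; exact mem_forwardTube_iff
  exact h ▸ isOpen_lt continuous_const continuous_tubeMargin

noncomputable def phase (c : ℂ) (k : EuclideanSpace ℝ (Fin 3)) : (Fin 4 → ℂ) →L[ℂ] ℂ :=
  (-I * c) • proj 0 + I • ∑ i : Fin 3, (k i : ℂ) • proj i.succ

theorem phase_apply (c : ℂ) (k : EuclideanSpace ℝ (Fin 3)) (z : Fin 4 → ℂ) :
    phase c k z = -I * c * z 0 + I * ((k 0 : ℂ) * z 1 + (k 1 : ℂ) * z 2 + (k 2 : ℂ) * z 3) := by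
  simp only [phase, Fin.sum_univ_three, Fin.succ_zero_eq_one, Fin.succ_one_eq_two, Fin.reduceSucc,
    add_apply, smul_apply, proj_apply, smul_eq_mul]

theorem ContinuousLinearMap.norm_proj_le_one {ι 𝕜 : Type*} [Fintype ι] [NontriviallyNormedField 𝕜]
    {φ : ι → Type*} [∀ i, SeminormedAddCommGroup (φ i)] [∀ i, NormedSpace 𝕜 (φ i)] (i : ι) :
    ‖proj (R := 𝕜) (φ := φ) i‖ ≤ 1 :=
  opNorm_le_bound _ zero_le_one fun z => by simpa using norm_le_pi_norm z i

theorem norm_phase_le (c : ℂ) (k : EuclideanSpace ℝ (Fin 3)) : ‖phase c k‖ ≤ ‖c‖ + 3 * ‖k‖ := by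
  have hk (i : Fin 3) : ‖(k i : ℂ)‖ ≤ ‖k‖ := by
    simpa only [Complex.norm_real] using PiLp.norm_apply_le k i
  calc ‖phase c k‖ ≤ ‖-I * c‖ * 1 + ‖I‖ * ∑ i : Fin 3, ‖(k i : ℂ)‖ * 1 := by
        refine (norm_add_le _ _).trans (add_le_add ((opNorm_smul_le _ _).trans ?_)
          ((opNorm_smul_le _ _).trans ?_))
        · gcongr
          exact norm_proj_le_one 0
        · gcongr
          exact (norm_sum_le _ _).trans (Finset.sum_le_sum fun i _ =>
            (opNorm_smul_le _ _).trans (by gcongr; exact norm_proj_le_one _))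
    _ ≤ ‖c‖ + 3 * ‖k‖ := by
        simp only [norm_mul, norm_neg, Complex.norm_I, one_mul, mul_one, Fin.sum_univ_three]
        linarith [hk 0, hk 1, hk 2]

theorem re_phase_le (c : ℂ) (k : EuclideanSpace ℝ (Fin 3)) (z : Fin 4 → ℂ) :
    (phase c k z).re ≤ ‖c - ‖k‖‖ * ‖z 0‖ - tubeMargin z * ‖k‖ := by
  have hc : (-I * (c - ‖k‖) * z 0).re ≤ ‖c - ‖k‖‖ * ‖z 0‖ :=
    (re_le_norm _).trans (by simp)
  have hinner : inner ℝ k (spatialIm z) = k 0 * (z 1).im + k 1 * (z 2).im + k 2 * (z 3).im := by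
    simp [spatialIm, PiLp.inner_apply, Fin.sum_univ_three, mul_comm]
  have hk : -inner ℝ k (spatialIm z) ≤ ‖k‖ * ‖spatialIm z‖ :=
    (neg_le_abs _).trans (abs_real_inner_le_norm _ _)
  simp only [phase_apply, tubeMargin, hinner, add_re, add_im, mul_re, mul_im, neg_re, neg_im,
    sub_re, sub_im, I_re, I_im, ofReal_re, ofReal_im] at hc hk ⊢
  linarith

theorem continuous_phase {c : EuclideanSpace ℝ (Fin 3) → ℂ} (hc : Continuous c) :
    Continuous fun k => phase (c k) k := by
  unfold phase
  fun_prop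

theorem Complex.norm_le_norm_add_ofReal {s : ℂ} (hs : 0 ≤ s.re) {t : ℝ} (ht : 0 ≤ t) :
    ‖s‖ ≤ ‖s + t‖ := by
  rw [← sq_le_sq₀ (norm_nonneg _) (norm_nonneg _), Complex.sq_norm, Complex.sq_norm,
    Complex.normSq_apply, Complex.normSq_apply]
  simp only [add_re, ofReal_re, add_im, ofReal_im, add_zero]
  nlinarith

theorem Esqrt_mul_self (ζ : ℂ) (k : EuclideanSpace ℝ (Fin 3)) :
    Esqrt ζ k * Esqrt ζ k = ‖k‖ ^ 2 + ζ := by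
  rw [← sq, Esqrt, one_div, cpow_ofNat_inv_pow]
  push_cast
  rfl

theorem re_Esqrt_nonneg (ζ : ℂ) (k : EuclideanSpace ℝ (Fin 3)) : 0 ≤ (Esqrt ζ k).re := by
  rw [Esqrt, one_div, cpow_inv_two_re]
  exact Real.sqrt_nonneg _

theorem sqrt_im_le_norm_Esqrt (ζ : ℂ) (k : EuclideanSpace ℝ (Fin 3)) :
    Real.sqrt ζ.im ≤ ‖Esqrt ζ k‖ := by
  have h : ζ.im ≤ ‖Esqrt ζ k‖ ^ 2 := by
    rw [sq, ← norm_mul, Esqrt_mul_self]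
    refine le_trans ?_ (abs_im_le_norm _)
    simp [← ofReal_pow, le_abs_self]
  simpa using Real.sqrt_le_sqrt h

theorem norm_Esqrt_sub_le {ζ : ℂ} (hζ : 0 < ζ.im) (k : EuclideanSpace ℝ (Fin 3)) :
    ‖Esqrt ζ k - ‖k‖‖ ≤ ‖ζ‖ / Real.sqrt ζ.im := by
  rw [le_div_iff₀ (Real.sqrt_pos.2 hζ)]
  calc ‖Esqrt ζ k - ‖k‖‖ * Real.sqrt ζ.im
      ≤ ‖Esqrt ζ k - ‖k‖‖ * ‖Esqrt ζ k + ‖k‖‖ := by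
        gcongr
        exact (sqrt_im_le_norm_Esqrt ζ k).trans
          (Complex.norm_le_norm_add_ofReal (re_Esqrt_nonneg ζ k) (norm_nonneg k))
    _ = ‖ζ‖ := by
        rw [← norm_mul]
        congr 1
        linear_combination Esqrt_mul_self ζ k

theorem continuous_Esqrt {ζ : ℂ} (hζ : ζ ∈ slitPlane) : Continuous (Esqrt ζ) := by
  have hmem (k : EuclideanSpace ℝ (Fin 3)) : ((‖k‖ ^ 2 : ℝ) : ℂ) + ζ ∈ slitPlane := by
    rw [mem_slitPlane_iff] at hζ ⊢
    simp only [add_re, ofReal_re, add_im, ofReal_im, zero_add]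
    exact hζ.imp (fun h => by positivity) id
  unfold Esqrt
  exact continuous_iff_continuousAt.2 fun k => (continuousAt_cpow_const (hmem k)).comp
    (f := fun k : EuclideanSpace ℝ (Fin 3) => ((‖k‖ ^ 2 : ℝ) : ℂ) + ζ) (by fun_prop)

noncomputable def poleMode (w c : ℂ) (k : EuclideanSpace ℝ (Fin 3)) (z : Fin 4 → ℂ) : ℂ :=
  w * (2 * c)⁻¹ * cexp (phase c k z)

theorem norm_poleMode_le {w c : ℂ} {δ : ℝ} (hδ : 0 < δ) (hc : δ ≤ ‖c‖)
    (k : EuclideanSpace ℝ (Fin 3)) (z : Fin 4 → ℂ) :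
    ‖poleMode w c k z‖ ≤
      ‖w‖ / (2 * δ) * Real.exp (‖c - ‖k‖‖ * ‖z 0‖ - tubeMargin z * ‖k‖) := by
  rw [poleMode, norm_mul, norm_mul, norm_exp, norm_inv, norm_mul, Complex.norm_two,
    div_eq_mul_inv]
  gcongr
  exact re_phase_le c k z

structure IsShellEnergy (c : EuclideanSpace ℝ (Fin 3) → ℂ) (δ C : ℝ) : Prop where
  continuous : Continuous c
  pos : 0 < δ
  le_norm : ∀ k, δ ≤ ‖c k‖
  norm_sub_le : ∀ k, ‖c k - ‖k‖‖ ≤ C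

theorem isShellEnergy_Esqrt {ζ : ℂ} (hζ : 0 < ζ.im) :
    IsShellEnergy (Esqrt ζ) (Real.sqrt ζ.im) (‖ζ‖ / Real.sqrt ζ.im) where
  continuous := continuous_Esqrt (mem_slitPlane_iff.2 (Or.inr hζ.ne'))
  pos := Real.sqrt_pos.2 hζ
  le_norm := sqrt_im_le_norm_Esqrt ζ
  norm_sub_le := norm_Esqrt_sub_le hζ

namespace IsShellEnergy

variable {c : EuclideanSpace ℝ (Fin 3) → ℂ} {δ C : ℝ}

theorem conjugate (hc : IsShellEnergy c δ C) : IsShellEnergy (fun k => conj (c k)) δ C where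
  continuous := by have := hc.continuous; fun_prop
  pos := hc.pos
  le_norm k := by simpa only [norm_conj] using hc.le_norm k
  norm_sub_le k := by
    rw [← conj_ofReal, ← map_sub, norm_conj]
    exact hc.norm_sub_le k

theorem ne_zero (hc : IsShellEnergy c δ C) (k : EuclideanSpace ℝ (Fin 3)) : c k ≠ 0 :=
  norm_pos_iff.1 (hc.pos.trans_le (hc.le_norm k))

theorem continuous_amplitude (hc : IsShellEnergy c δ C) (w : ℂ) :
    Continuous fun k => w * (2 * c k)⁻¹ := by
  have := hc.continuous
  fun_prop (disch := exact fun k => mul_ne_zero two_ne_zero (hc.ne_zero k))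

theorem exists_eventually_norm_poleMode_le (hc : IsShellEnergy c δ C) (w : ℂ) {z₀ : Fin 4 → ℂ}
    (hz₀ : z₀ ∈ ForwardTube) :
    ∃ ε > 0, ∃ K, ∀ᶠ z in 𝓝 z₀, ∀ k, ‖poleMode w (c k) k z‖ ≤ K * Real.exp (-ε * ‖k‖) := by
  rw [mem_forwardTube_iff] at hz₀
  have hmargin : ∀ᶠ z in 𝓝 z₀, tubeMargin z₀ / 2 < tubeMargin z :=
    continuous_tubeMargin.continuousAt.eventually (lt_mem_nhds (by linarith))
  have htime : ∀ᶠ z in 𝓝 z₀, ‖z 0‖ < ‖z₀ 0‖ + 1 :=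
    (continuous_norm.comp (continuous_apply 0)).continuousAt.eventually
      (gt_mem_nhds (lt_add_one _))
  have hC : 0 ≤ C := (norm_nonneg _).trans (hc.norm_sub_le 0)
  have hδ := hc.pos
  refine ⟨tubeMargin z₀ / 2, by linarith, ‖w‖ / (2 * δ) * Real.exp (C * (‖z₀ 0‖ + 1)), ?_⟩
  filter_upwards [hmargin, htime] with z hm ht k
  refine (norm_poleMode_le hδ (hc.le_norm k) k z).trans ?_
  rw [mul_assoc, ← Real.exp_add]
  gcongr
  have : ‖c k - ‖k‖‖ * ‖z 0‖ ≤ C * (‖z₀ 0‖ + 1) := by gcongr; exact hc.norm_sub_le k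
  nlinarith [norm_nonneg k]

theorem integrable_poleMode (hc : IsShellEnergy c δ C) (w : ℂ) {z : Fin 4 → ℂ}
    (hz : z ∈ ForwardTube) : Integrable fun k => poleMode w (c k) k z := by
  obtain ⟨ε, hε, K, hK⟩ := hc.exists_eventually_norm_poleMode_le w hz
  have hmeas : Continuous fun k => poleMode w (c k) k z :=
    (hc.continuous_amplitude w).mul
      (continuous_exp.comp ((continuous_phase hc.continuous).clm_apply continuous_const))
  refine Integrable.mono' ?_ hmeas.aestronglyMeasurable (.of_forall hK.self_of_nhds)
  simpa using (integrable_norm_pow_mul_exp_neg_mul_norm volume 0 hε).const_mul K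

theorem differentiableAt_integral_poleMode (hc : IsShellEnergy c δ C) (w : ℂ)
    {z₀ : Fin 4 → ℂ} (hz₀ : z₀ ∈ ForwardTube) :
    DifferentiableAt ℂ (fun z => ∫ k, poleMode w (c k) k z) z₀ := by
  obtain ⟨ε, hε, K, hK⟩ := hc.exists_eventually_norm_poleMode_le w hz₀
  have hbound_int : Integrable fun k : EuclideanSpace ℝ (Fin 3) =>
      K * Real.exp (-ε * ‖k‖) * (C + 4 * ‖k‖) := by
    have h0 := integrable_norm_pow_mul_exp_neg_mul_norm
      (volume : Measure (EuclideanSpace ℝ (Fin 3))) 0 hε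
    have h1 := integrable_norm_pow_mul_exp_neg_mul_norm
      (volume : Measure (EuclideanSpace ℝ (Fin 3))) 1 hε
    refine (((h0.const_mul C).add (h1.const_mul 4)).const_mul K).congr (.of_forall fun k => ?_)
    simp only [Pi.add_apply, pow_zero, pow_one]
    ring
  have hbound (k : EuclideanSpace ℝ (Fin 3)) (z : Fin 4 → ℂ)
      (hz : ∀ k, ‖poleMode w (c k) k z‖ ≤ K * Real.exp (-ε * ‖k‖)) :
      ‖poleMode w (c k) k z‖ * ‖phase (c k) k‖ ≤ K * Real.exp (-ε * ‖k‖) * (C + 4 * ‖k‖) := by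
    have hck : ‖c k‖ ≤ ‖k‖ + C := by
      have h := norm_le_norm_add_norm_sub' (c k) (‖k‖ : ℂ)
      rw [Complex.norm_real, norm_norm] at h
      linarith [hc.norm_sub_le k]
    exact mul_le_mul (hz k) ((norm_phase_le (c k) k).trans (by linarith)) (norm_nonneg _)
      ((norm_nonneg _).trans (hz k))
  exact (hasFDerivAt_integral_mul_cexp (hc.continuous_amplitude w).aestronglyMeasurable
    (continuous_phase hc.continuous).aestronglyMeasurable hK (hc.integrable_poleMode w hz₀)
    (.of_forall hbound) hbound_int).differentiableAt

end IsShellEnergy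

/-- Theorem 3 of the paper: for `Im ζ > 0` and `Z ∈ ℂ`, the integrand of
the reconstructed Wightman function of the pair of complex-conjugate poles
`Z/(k² + ζ) + Z*/(k² + ζ*)` is integrable over `ℝ³` for every `z` in the forward tube, and
the resulting function is holomorphic (ℂ-differentiable) at every point of the tube. -/
theorem cpWightman_holomorphic_on_tube (ζ : ℂ) (hζ : 0 < ζ.im) (Z : ℂ) :
    (∀ z ∈ ForwardTube, Integrable (cpIntegrand ζ Z z)) ∧
    (∀ z ∈ ForwardTube, DifferentiableAt ℂ (cpWightman ζ Z) z) := by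
  have hsplit (z : Fin 4 → ℂ) : cpIntegrand ζ Z z = fun k =>
      poleMode Z (Esqrt ζ k) k z + poleMode (conj Z) (conj (Esqrt ζ k)) k z := by
    funext k
    simp only [cpIntegrand, poleMode, phase_apply]
  have hE := isShellEnergy_Esqrt hζ
  have hint {z : Fin 4 → ℂ} (hz : z ∈ ForwardTube) :
      Integrable (fun k => poleMode Z (Esqrt ζ k) k z) ∧
        Integrable (fun k => poleMode (conj Z) (conj (Esqrt ζ k)) k z) :=
    ⟨hE.integrable_poleMode Z hz, hE.conjugate.integrable_poleMode (conj Z) hz⟩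
  refine ⟨fun z hz => hsplit z ▸ (hint hz).1.add (hint hz).2, fun z hz => ?_⟩
  have heq : cpWightman ζ Z =ᶠ[𝓝 z] fun z => ((2 * Real.pi : ℝ) : ℂ)⁻¹ ^ 3 *
      ((∫ k, poleMode Z (Esqrt ζ k) k z) + ∫ k, poleMode (conj Z) (conj (Esqrt ζ k)) k z) := by
    filter_upwards [isOpen_forwardTube.mem_nhds hz] with z' hz'
    rw [cpWightman, hsplit, integral_add (hint hz').1 (hint hz').2]
  refine DifferentiableAt.congr_of_eventuallyEq (.const_mul ?_ _) heq
  exact (hE.differentiableAt_integral_poleMode Z hz).add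
    (hE.conjugate.differentiableAt_integral_poleMode (conj Z) hz)
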